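/- Let (x_n) be a sequence of real-valued random variables on a common probability space such that each x_n has a unique median m_n, and let (x_n') be an independent copy of the sequence (x_n), defined on a product probability space. If x_n − x_n' → 0 almost surely, then x_n − m_n → 0 almost surely. -/

import Mathlib

/-!
Fubini gives a single `ω'` such that `x n - b n → 0` almost surely for the constants
`b n = x' n ω'`. Almost sure convergence implies convergence in measure, so eventually
`|x n - b n| ≥ ε` has probability `< 1/2`; since each of the events `{x n ≤ m n}` and
`{m n ≤ x n}` has probability `≥ 1/2`, this forces `|b n - m n| < ε`. Hence `b n - m n → 0`,
and `x n - m n = (x n - b n) + (b n - m n) → 0` almost surely.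
-/

open MeasureTheory ProbabilityTheory Filter

/-- `m` is a median of the real random variable `x` under `P`. -/
def IsMedian {Ω : Type*} [MeasurableSpace Ω] (P : Measure Ω) (x : Ω → ℝ) (m : ℝ) : Prop :=
  (1 / 2 : ENNReal) ≤ P {ω | x ω ≤ m} ∧ (1 / 2 : ENNReal) ≤ P {ω | m ≤ x ω}

open scoped Topology

theorem MeasureTheory.Measure.exists_ae_of_ae_prod {α β : Type*} [MeasurableSpace α]
    [MeasurableSpace β] {μ : Measure α} {ν : Measure β} [SFinite μ] [SFinite ν] [NeZero ν]
    {p : α → β → Prop} (h : ∀ᵐ z ∂μ.prod ν, p z.1 z.2) : ∃ y, ∀ᵐ x ∂μ, p x y :=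
  (Measure.ae_ae_of_ae_prod (Measure.measurePreserving_swap.quasiMeasurePreserving.ae h)).exists

theorem IsMedian.half_le_measure_le_abs_sub {Ω : Type*} [MeasurableSpace Ω] {P : Measure Ω}
    {x : Ω → ℝ} {m b ε : ℝ} (hm : IsMedian P x m) (hε : ε ≤ |b - m|) :
    1 / 2 ≤ P {ω | ε ≤ |x ω - b|} := by
  rcases le_abs'.1 hε with hbm | hmb
  · refine hm.2.trans (measure_mono fun ω (hω : m ≤ x ω) => ?_)
    exact (by linarith : ε ≤ x ω - b).trans (le_abs_self _)
  · refine hm.1.trans (measure_mono fun ω (hω : x ω ≤ m) => ?_)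
    exact (by linarith : ε ≤ -(x ω - b)).trans (neg_le_abs _)

theorem tendsto_sub_median_of_tendstoInMeasure {Ω ι : Type*} [MeasurableSpace Ω]
    {P : Measure Ω} {l : Filter ι} {x : ι → Ω → ℝ} {b m : ι → ℝ}
    (hmed : ∀ i, IsMedian P (x i) (m i))
    (hx : TendstoInMeasure P (fun i ω => x i ω - b i) l 0) :
    Tendsto (fun i => b i - m i) l (𝓝 0) := by
  refine Metric.tendsto_nhds.2 fun ε hε => ?_
  have hsmall : ∀ᶠ i in l, P {ω | ε ≤ |x i ω - b i|} < 1 / 2 := by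
    simpa [Real.dist_eq] using
      (tendstoInMeasure_iff_dist.1 hx ε hε).eventually (gt_mem_nhds (by norm_num))
  filter_upwards [hsmall] with i hi
  rw [Real.dist_eq, sub_zero, ← not_le]
  exact fun hbig => (hi.trans_le ((hmed i).half_le_measure_le_abs_sub hbig)).false

theorem tendsto_sub_median_ae_of_tendsto_sub_ae {Ω : Type*} [MeasurableSpace Ω]
    {P : Measure Ω} [IsFiniteMeasure P] {x : ℕ → Ω → ℝ} {b m : ℕ → ℝ}
    (hmeas : ∀ n, AEStronglyMeasurable (x n) P) (hmed : ∀ n, IsMedian P (x n) (m n))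
    (hx : ∀ᵐ ω ∂P, Tendsto (fun n => x n ω - b n) atTop (𝓝 0)) :
    ∀ᵐ ω ∂P, Tendsto (fun n => x n ω - m n) atTop (𝓝 0) := by
  have hbm : Tendsto (fun n => b n - m n) atTop (𝓝 0) :=
    tendsto_sub_median_of_tendstoInMeasure hmed
      (tendstoInMeasure_of_tendsto_ae (fun n => (hmeas n).sub aestronglyMeasurable_const) hx)
  filter_upwards [hx] with ω hω
  simpa using hω.add hbm

theorem sub_median_tendsto_ae_general
    {Ω Ω' : Type*} [MeasurableSpace Ω] [MeasurableSpace Ω']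
    (P : Measure Ω) [IsProbabilityMeasure P]
    (P' : Measure Ω') [IsProbabilityMeasure P']
    (x : ℕ → Ω → ℝ) (x' : ℕ → Ω' → ℝ) (m : ℕ → ℝ)
    (hmeas : ∀ n, Measurable (x n))
    (hmed : ∀ n, IsMedian P (x n) (m n))
    (hconv : ∀ᵐ p ∂(P.prod P'),
      Tendsto (fun n => x n p.1 - x' n p.2) atTop (nhds 0)) :
    ∀ᵐ ω ∂P, Tendsto (fun n => x n ω - m n) atTop (nhds 0) := by
  obtain ⟨ω', hω'⟩ := Measure.exists_ae_of_ae_prod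
    (p := fun ω ω' => Tendsto (fun n => x n ω - x' n ω') atTop (𝓝 0)) hconv
  exact tendsto_sub_median_ae_of_tendsto_sub_ae (fun n => (hmeas n).aestronglyMeasurable) hmed hω'

/-- If each `x_n` has a unique median `m_n`, `(x_n')` is an independent copy of
the sequence `(x_n)` defined on a product probability space, and
`x_n(ω) − x_n'(ω') → 0` for `P ⊗ P'`-a.e. `(ω, ω')`, then `x_n − m_n → 0` `P`-a.s. -/
theorem sub_median_tendsto_ae
    {Ω Ω' : Type*} [MeasurableSpace Ω] [MeasurableSpace Ω']
    (P : Measure Ω) [IsProbabilityMeasure P]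
    (P' : Measure Ω') [IsProbabilityMeasure P']
    (x : ℕ → Ω → ℝ) (x' : ℕ → Ω' → ℝ) (m : ℕ → ℝ)
    (hmeas : ∀ n, Measurable (x n)) (hmeas' : ∀ n, Measurable (x' n))
    (hid : ∀ n, P.map (x n) = P'.map (x' n))
    (hmed : ∀ n, IsMedian P (x n) (m n))
    (huniq : ∀ n m', IsMedian P (x n) m' → m' = m n)
    (hconv : ∀ᵐ p ∂(P.prod P'),
      Tendsto (fun n => x n p.1 - x' n p.2) atTop (nhds 0)) :
    ∀ᵐ ω ∂P, Tendsto (fun n => x n ω - m n) atTop (nhds 0) :=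
  sub_median_tendsto_ae_general P P' x x' m hmeas hmed hconv
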